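/- arXiv:1310.5634 — 2 statements merged into one kernel-verified Lean document; each statement's English description precedes it below -/
import Mathlib

section
/- Let n > 1 be an odd integer. Then there exists an n×n tournament matrix T (i.e. a (0,1)-matrix with T_{ii} = 0 for all i and T_{ij} + T_{ji} = 1 for all i ≠ j) such that per(T) ≥ √e · ((n−1)/(2e))ⁿ. -/
/-!
Orient each edge of the complete graph on `n` vertices independently and uniformly at random. A
permutation `σ` without fixed points and 2-cycles reads its `n` entries `(i, σ i)` off `n` distinct
edges, so it contributes exactly `2⁻ⁿ` to the expected permanent; hence some tournament has
permanent at least `S / 2ⁿ`, where `S` counts such permutations. A union bound over the possible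
2-cycles gives `S ≥ D(n) - (n choose 2) D(n - 2)` for the derangement numbers `D`. For odd `n` the
alternating series of `1/e` gives `D(n - 2) ≤ (n - 2)!/e` and `D(n) ≥ n!/e - 1/(n + 1)`, so
`S ≥ n!/(2e) - 1/(n + 1)`; Stirling's bound `n! ≥ √(2πn) (n/e)ⁿ` and `e (n - 1)ⁿ ≤ nⁿ` finish.
-/

open Nat

/-- The permanent of a square real matrix. -/
noncomputable def perm {n : ℕ} (M : Matrix (Fin n) (Fin n) ℝ) : ℝ :=
  ∑ σ : Equiv.Perm (Fin n), ∏ i, M i (σ i)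

open Finset Equiv Filter Topology

theorem card_filter_comp_eq {α β γ : Type*} [Fintype α] [DecidableEq α] [Fintype β]
    [Fintype γ] [DecidableEq γ] {k : β → α} (hk : Function.Injective k) (v : β → γ) :
    #{u : α → γ | ∀ i, u (k i) = v i} =
      Fintype.card γ ^ (Fintype.card α - Fintype.card β) := by
  set t : α → Finset γ := fun a => {c | ∀ i, k i = a → c = v i}
  have hpi : ({u : α → γ | ∀ i, u (k i) = v i} : Finset _) = Fintype.piFinset t := by
    ext u
    simp only [mem_filter, mem_univ, true_and, Fintype.mem_piFinset, t]
    exact ⟨fun h a i hi => hi ▸ h i, fun h i => h _ i rfl⟩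
  have ht : ∀ a, #(t a) = if a ∈ univ.image k then 1 else Fintype.card γ := by
    intro a
    split_ifs with ha
    · obtain ⟨i, -, rfl⟩ := mem_image.mp ha
      rw [card_eq_one]
      exact ⟨v i, by ext c; simp [t, hk.eq_iff]⟩
    · have : t a = univ := by
        ext c
        simp only [t, mem_filter, mem_univ, true_and, iff_true]
        intro i hi
        exact absurd (mem_image_of_mem k (mem_univ i)) (hi ▸ ha)
      rw [this, Finset.card_univ]
  rw [hpi, Fintype.card_piFinset, prod_congr rfl fun a _ => ht a, prod_ite, prod_const_one,
    one_mul, prod_const, filter_not, filter_univ_mem, card_sdiff_of_subset (subset_univ _),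
    card_image_of_injective _ hk, Finset.card_univ, Finset.card_univ]

theorem injective_sym2_mk_apply {α : Type*} {σ : Perm α} (hσ : ∀ x, σ (σ x) ≠ x) :
    Function.Injective fun x => s(x, σ x) := by
  intro x y hxy
  rcases Sym2.eq_iff.mp hxy with ⟨h, -⟩ | ⟨rfl, h⟩
  · exact h
  · exact absurd h (hσ y)

def shortCycleFree (α : Type*) [Fintype α] [DecidableEq α] : Finset (Perm α) :=
  {σ | ∀ x, σ x ≠ x ∧ σ (σ x) ≠ x}

section Tournament

variable {α : Type*} [LinearOrder α]

/-- `u s(i, j) = true` orients the edge `{i, j}` from the smaller to the larger vertex. -/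
def tournamentMatrix (u : Sym2 α → Bool) : Matrix α α ℝ :=
  fun i j => if i ≠ j ∧ u s(i, j) = decide (i < j) then 1 else 0

variable (u : Sym2 α → Bool)

theorem tournamentMatrix_eq_zero_or_one (i j : α) :
    tournamentMatrix u i j = 0 ∨ tournamentMatrix u i j = 1 := by
  unfold tournamentMatrix; split_ifs <;> simp

theorem tournamentMatrix_nonneg (i j : α) : 0 ≤ tournamentMatrix u i j := by
  rcases tournamentMatrix_eq_zero_or_one u i j with h | h <;> simp [h]

theorem tournamentMatrix_self (i : α) : tournamentMatrix u i i = 0 := by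
  simp [tournamentMatrix]

theorem tournamentMatrix_add_swap {i j : α} (hij : i ≠ j) :
    tournamentMatrix u i j + tournamentMatrix u j i = 1 := by
  rcases hij.lt_or_gt with h | h <;> cases hu : u s(i, j) <;>
    simp [tournamentMatrix, Sym2.eq_swap (a := j), hu, h, h.not_gt, hij, hij.symm]

variable [Fintype α]

theorem sum_prod_tournamentMatrix_of_mem_shortCycleFree {σ : Perm α}
    (hσ : σ ∈ shortCycleFree α) :
    ∑ u : Sym2 α → Bool, ∏ i, tournamentMatrix u i (σ i) =
      2 ^ (Fintype.card (Sym2 α) - Fintype.card α) := by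
  simp only [shortCycleFree, mem_filter, mem_univ, true_and] at hσ
  have hcard := card_filter_comp_eq (injective_sym2_mk_apply fun x => (hσ x).2)
    fun i => decide (i < σ i)
  rw [Fintype.card_bool] at hcard
  simp only [tournamentMatrix, Fintype.prod_boole, sum_boole, ne_eq, fun i => (hσ i).1.symm,
    not_false_eq_true, true_and, hcard]
  norm_cast

end Tournament

theorem exists_card_shortCycleFree_div_le_perm (n : ℕ) :
    ∃ u : Sym2 (Fin n) → Bool,
      (#(shortCycleFree (Fin n)) : ℝ) / 2 ^ n ≤ perm (tournamentMatrix u) := by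
  obtain ⟨N, hN⟩ : ∃ N, Fintype.card (Sym2 (Fin n)) = N := ⟨_, rfl⟩
  have hnN : n ≤ N := by
    simpa only [Fintype.card_fin, hN] using
      Fintype.card_le_of_injective _ (Sym2.diag_injective (α := Fin n))
  have hsum : ∑ _u : Sym2 (Fin n) → Bool, (#(shortCycleFree (Fin n)) : ℝ) / 2 ^ n
      ≤ ∑ u : Sym2 (Fin n) → Bool, perm (tournamentMatrix u) :=
    calc ∑ _u : Sym2 (Fin n) → Bool, (#(shortCycleFree (Fin n)) : ℝ) / 2 ^ n
        = ∑ _σ ∈ shortCycleFree (Fin n), (2 : ℝ) ^ (N - n) := by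
          rw [sum_const, sum_const, Finset.card_univ, Fintype.card_fun, Fintype.card_bool, hN,
            nsmul_eq_mul, nsmul_eq_mul, ← pow_sub_mul_pow 2 hnN]
          push_cast
          field_simp
      _ = ∑ σ ∈ shortCycleFree (Fin n), ∑ u : Sym2 (Fin n) → Bool,
            ∏ i, tournamentMatrix u i (σ i) := by
          refine sum_congr rfl fun σ hσ => ?_
          rw [sum_prod_tournamentMatrix_of_mem_shortCycleFree hσ, Fintype.card_fin, hN]
      _ ≤ ∑ σ : Perm (Fin n), ∑ u : Sym2 (Fin n) → Bool, ∏ i, tournamentMatrix u i (σ i) :=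
          sum_le_sum_of_subset_of_nonneg (subset_univ _) fun σ _ _ =>
            sum_nonneg fun u _ => prod_nonneg fun i _ => tournamentMatrix_nonneg u i (σ i)
      _ = ∑ u : Sym2 (Fin n) → Bool, perm (tournamentMatrix u) := by
          rw [sum_comm]; simp only [perm]
  obtain ⟨u, -, hu⟩ := exists_le_of_sum_le univ_nonempty hsum
  exact ⟨u, hu⟩

theorem numDerangements_div_factorial (n : ℕ) :
    (numDerangements n : ℝ) / n ! = ∑ k ∈ range (n + 1), (-1) ^ k * (k ! : ℝ)⁻¹ := by
  rw [← Int.cast_natCast, numDerangements_sum]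
  push_cast
  rw [sum_div]
  refine sum_congr rfl fun k hk => ?_
  have hkn : k ≤ n := mem_range_succ_iff.mp hk
  rw [Nat.ascFactorial_eq_div, add_tsub_cancel_of_le hkn]
  push_cast [Nat.factorial_dvd_factorial hkn]
  field

theorem tendsto_sum_range_neg_one_pow_mul_inv_factorial :
    Tendsto (fun n => ∑ k ∈ range n, (-1) ^ k * (k ! : ℝ)⁻¹) atTop (𝓝 (Real.exp (-1))) := by
  simp_rw [← div_eq_mul_inv]
  rw [Real.exp_eq_exp_ℝ]
  exact (NormedSpace.expSeries_div_hasSum_exp (-1 : ℝ)).tendsto_sum_nat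

theorem antitone_inv_factorial : Antitone fun k : ℕ => (k ! : ℝ)⁻¹ := fun _ _ h =>
  inv_anti₀ (by positivity) (by exact_mod_cast Nat.factorial_le h)

theorem numDerangements_le_of_odd {m : ℕ} (hm : Odd m) :
    (numDerangements m : ℝ) ≤ m ! * Real.exp (-1) := by
  obtain ⟨k, rfl⟩ := hm
  rw [← div_le_iff₀' (by positivity), numDerangements_div_factorial,
    show 2 * k + 1 + 1 = 2 * (k + 1) by ring]
  exact antitone_inv_factorial.alternating_series_le_tendsto
    tendsto_sum_range_neg_one_pow_mul_inv_factorial _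

theorem le_numDerangements_of_even {m : ℕ} (hm : Even m) :
    m ! * Real.exp (-1) ≤ numDerangements m := by
  obtain ⟨k, rfl⟩ := hm
  rw [← le_div_iff₀' (by positivity), numDerangements_div_factorial, ← two_mul]
  exact antitone_inv_factorial.tendsto_le_alternating_series
    tendsto_sum_range_neg_one_pow_mul_inv_factorial _

theorem sub_inv_le_numDerangements_of_odd {m : ℕ} (hm : Odd m) :
    m ! * Real.exp (-1) - ((m : ℝ) + 1)⁻¹ ≤ numDerangements m := by
  have hsucc : (numDerangements (m + 1) : ℝ) = (m + 1) * numDerangements m + 1 := by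
    have := numDerangements_succ m
    rw [hm.neg_one_pow] at this
    exact_mod_cast (by linarith : (numDerangements (m + 1) : ℤ) = (m + 1) * numDerangements m + 1)
  have heven := le_numDerangements_of_even hm.add_one
  rw [hsucc, Nat.factorial_succ, Nat.cast_mul] at heven
  rw [sub_le_iff_le_add, ← mul_le_mul_iff_of_pos_left (by positivity : (0 : ℝ) < m + 1)]
  push_cast at heven
  rw [mul_add, mul_inv_cancel₀ (by positivity)]
  linarith

section Derangements

variable {α : Type*} [Fintype α] [DecidableEq α]

theorem card_filter_derangement_mapsTo_pair_le {s : Finset α} (hs : #s = 2) :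
    #{σ : Perm α | (∀ x, σ x ≠ x) ∧ ∀ x ∈ s, σ x ∈ s} ≤
      numDerangements (Fintype.card α - 2) := by
  obtain ⟨a, b, -, rfl⟩ := card_eq_two.mp hs
  -- `σ * swap a b` fixes exactly `a` and `b`, i.e. it is a derangement of `{a, b}ᶜ`.
  calc _ ≤ #{τ : Perm α | ∀ x, ¬x ∉ ({a, b} : Finset α) ↔ x ∈ Function.fixedPoints τ} := by
        refine card_le_card_of_injOn (· * swap a b) (fun σ hσ => ?_)
          (mul_left_injective _).injOn
        simp only [coe_filter, mem_univ, true_and, Set.mem_ofPred_eq, mem_insert, mem_singleton,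
          forall_eq_or_imp, forall_eq] at hσ ⊢
        obtain ⟨hder, ha, hb⟩ := hσ
        have hσa : σ a = b := ha.resolve_left (hder a)
        have hσb : σ b = a := hb.resolve_right (hder b)
        intro x
        simp only [not_not, Function.mem_fixedPoints, Function.IsFixedPt, Perm.mul_apply]
        rcases eq_or_ne x a with rfl | hxa
        · simp [hσb]
        rcases eq_or_ne x b with rfl | hxb
        · simp [hσa]
        simp [swap_apply_of_ne_of_ne hxa hxb, hxa, hxb, hder x]
    _ = Fintype.card (derangements {x // x ∉ ({a, b} : Finset α)}) := by
        rw [← Fintype.card_subtype]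
        exact (Fintype.card_congr (derangements.subtypeEquiv _)).symm
    _ = numDerangements (Fintype.card α - 2) := by
        rw [card_derangements_eq_numDerangements, Fintype.card_subtype_compl,
          Fintype.card_coe, hs]

theorem numDerangements_le_card_shortCycleFree_add :
    numDerangements (Fintype.card α) ≤
      #(shortCycleFree α) + (Fintype.card α).choose 2 * numDerangements (Fintype.card α - 2) := by
  have hcover : (derangements α).toFinset ⊆ shortCycleFree α ∪
      (powersetCard 2 univ).biUnion fun s => {σ | (∀ x, σ x ≠ x) ∧ ∀ x ∈ s, σ x ∈ s} := by
    intro σ hσ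
    have hder : ∀ x, σ x ≠ x := Set.mem_toFinset.mp hσ
    by_cases h2 : ∀ x, σ (σ x) ≠ x
    · exact mem_union_left _ (mem_filter.mpr ⟨mem_univ _, fun x => ⟨hder x, h2 x⟩⟩)
    · obtain ⟨x, hx⟩ := not_forall_not.mp h2
      refine mem_union_right _ (mem_biUnion.mpr ⟨{x, σ x}, ?_, ?_⟩)
      · exact mem_powersetCard.mpr ⟨subset_univ _, card_pair (hder x).symm⟩
      · simp [hder, hx]
  rw [← card_derangements_eq_numDerangements, ← Set.toFinset_card]
  calc #(derangements α).toFinset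
      ≤ #(shortCycleFree α) + #((powersetCard 2 univ).biUnion
          fun s => {σ : Perm α | (∀ x, σ x ≠ x) ∧ ∀ x ∈ s, σ x ∈ s}) :=
        (card_le_card hcover).trans (card_union_le _ _)
    _ ≤ #(shortCycleFree α) +
          (Fintype.card α).choose 2 * numDerangements (Fintype.card α - 2) := by
        gcongr
        refine card_biUnion_le.trans ?_
        rw [← Finset.card_univ, ← card_powersetCard, ← smul_eq_mul]
        exact sum_le_card_nsmul _ _ _ fun s hs =>
          card_filter_derangement_mapsTo_pair_le (mem_powersetCard.mp hs).2

theorem factorial_mul_exp_neg_one_div_two_sub_le_card_shortCycleFree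
    (hα : 1 < Fintype.card α) (hodd : Odd (Fintype.card α)) :
    (Fintype.card α)! * Real.exp (-1) / 2 - ((Fintype.card α : ℝ) + 1)⁻¹ ≤
      #(shortCycleFree α) := by
  obtain ⟨m, hm⟩ : ∃ m, Fintype.card α = m + 2 := ⟨Fintype.card α - 2, by omega⟩
  have hcount := numDerangements_le_card_shortCycleFree_add (α := α)
  have hlow := sub_inv_le_numDerangements_of_odd hodd
  rw [hm] at hodd hcount hlow ⊢
  have hup := numDerangements_le_of_odd (by simpa [parity_simps] using hodd : Odd m)
  rw [Nat.add_sub_cancel] at hcount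
  have hchoose : ((m + 2).choose 2 : ℝ) = (m + 2) * (m + 1) / 2 := by
    rw [Nat.cast_choose_two]; push_cast; ring
  have hcount' : (numDerangements (m + 2) : ℝ) ≤
      #(shortCycleFree α) + (m + 2) * (m + 1) / 2 * numDerangements m := by
    rw [← hchoose]; exact_mod_cast hcount
  have hpairs := mul_le_mul_of_nonneg_left hup (by positivity : (0 : ℝ) ≤ (m + 2) * (m + 1) / 2)
  rw [Nat.factorial_succ, Nat.factorial_succ] at hlow ⊢
  push_cast at hlow ⊢
  linarith

end Derangements

section Estimates

open Real

theorem exp_one_mul_sub_one_pow_le {n : ℕ} (hn : n ≠ 0) :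
    exp 1 * ((n : ℝ) - 1) ^ n ≤ (n : ℝ) ^ n := by
  have hpos : (0 : ℝ) < n := by positivity
  have h := one_sub_div_pow_le_exp_neg (n := n) (t := 1)
    (by exact_mod_cast Nat.one_le_iff_ne_zero.mpr hn)
  rw [one_sub_div hpos.ne', div_pow, div_le_iff₀ (by positivity), exp_neg] at h
  calc exp 1 * ((n : ℝ) - 1) ^ n ≤ exp 1 * ((exp 1)⁻¹ * n ^ n) := by gcongr
    _ = (n : ℝ) ^ n := by field_simp

theorem sqrt_exp_one_mul_pow_le_of_five_le {n : ℕ} (hn : 5 ≤ n) :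
    √(exp 1) * (((n : ℝ) - 1) / exp 1) ^ n ≤ n ! * exp (-1) / 2 - ((n : ℝ) + 1)⁻¹ := by
  have hn' : (5 : ℝ) ≤ n := by exact_mod_cast hn
  have he := exp_one_lt_d9
  have he' := exp_one_gt_d9
  set X := (((n : ℝ) - 1) / exp 1) ^ n with hX
  have hX1 : 1 ≤ X := one_le_pow₀ ((one_le_div (exp_pos 1)).mpr (by linarith))
  have hstirling := Stirling.le_factorial_stirling n
  have hpow : exp 1 * X ≤ ((n : ℝ) / exp 1) ^ n := by
    rw [hX, div_pow, div_pow, mul_div_assoc']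
    exact div_le_div_of_nonneg_right (exp_one_mul_sub_one_pow_le (by omega)) (by positivity)
  -- With `X ≥ 1` it suffices that `√(2πn) / 2 ≥ √e + 1`.
  have hsqrt_e : √(exp 1) ≤ 1.7 := (sqrt_le_left (by norm_num)).mpr (by nlinarith)
  have hsqrt_n : 5.4 ≤ √(2 * π * n) := le_sqrt_of_sq_le (by nlinarith [pi_gt_three])
  have hinv : ((n : ℝ) + 1)⁻¹ ≤ 1 := inv_le_one_of_one_le₀ (by linarith)
  have hfact : √(2 * π * n) * X ≤ n ! * (exp 1)⁻¹ := by
    rw [← div_eq_mul_inv, le_div_iff₀ (exp_pos 1)]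
    calc √(2 * π * n) * X * exp 1 ≤ √(2 * π * n) * ((n : ℝ) / exp 1) ^ n := by
          rw [mul_assoc, mul_comm X]; gcongr
      _ ≤ n ! := hstirling
  rw [exp_neg]
  nlinarith

theorem sqrt_exp_one_mul_pow_le_of_odd {n : ℕ} (hn : 1 < n) (hodd : Odd n) :
    √(exp 1) * (((n : ℝ) - 1) / exp 1) ^ n ≤ n ! * exp (-1) / 2 - ((n : ℝ) + 1)⁻¹ := by
  obtain rfl | hn5 : n = 3 ∨ 5 ≤ n := by obtain ⟨k, rfl⟩ := hodd; omega
  · have he := exp_one_gt_d9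
    have hsqrt_e : √(exp 1) ≤ 1.7 :=
      (sqrt_le_left (by norm_num)).mpr (by nlinarith [exp_one_lt_d9])
    have hratio : 2 / exp 1 ≤ 0.74 := (div_le_iff₀ (exp_pos 1)).mpr (by linarith)
    have hinv : 1.1 ≤ 3 * (exp 1)⁻¹ := by
      rw [← div_eq_mul_inv, le_div_iff₀ (exp_pos 1)]; linarith [exp_one_lt_d9]
    have hcube : (2 / exp 1) ^ 3 ≤ 0.74 ^ 3 := pow_le_pow_left₀ (by positivity) hratio 3
    norm_num [Nat.factorial, exp_neg]
    nlinarith [sqrt_nonneg (exp 1)]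
  · exact sqrt_exp_one_mul_pow_le_of_five_le hn5

end Estimates

/-- For every odd integer `n > 1` there is an `n×n` tournament matrix `T` with
`per(T) ≥ √e · ((n−1)/(2e))ⁿ`. -/
theorem stmt_18 (n : ℕ) (hn : 1 < n) (hodd : Odd n) :
    ∃ T : Matrix (Fin n) (Fin n) ℝ,
      (∀ i j, T i j = 0 ∨ T i j = 1) ∧ (∀ i, T i i = 0) ∧
      (∀ i j, i ≠ j → T i j + T j i = 1) ∧
      Real.sqrt (Real.exp 1) * (((n : ℝ) - 1) / (2 * Real.exp 1)) ^ n ≤ perm T := by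
  obtain ⟨u, hu⟩ := exists_card_shortCycleFree_div_le_perm n
  refine ⟨tournamentMatrix u, tournamentMatrix_eq_zero_or_one u, tournamentMatrix_self u,
    fun i j => tournamentMatrix_add_swap u, ?_⟩
  have hcard := factorial_mul_exp_neg_one_div_two_sub_le_card_shortCycleFree (α := Fin n)
    (by rwa [Fintype.card_fin]) (by rwa [Fintype.card_fin])
  rw [Fintype.card_fin] at hcard
  calc Real.sqrt (Real.exp 1) * (((n : ℝ) - 1) / (2 * Real.exp 1)) ^ n
      = Real.sqrt (Real.exp 1) * (((n : ℝ) - 1) / Real.exp 1) ^ n / 2 ^ n := by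
        rw [mul_comm 2, ← div_div, div_pow, mul_div_assoc]
    _ ≤ (n ! * Real.exp (-1) / 2 - ((n : ℝ) + 1)⁻¹) / 2 ^ n := by
        gcongr
        exact sqrt_exp_one_mul_pow_le_of_odd hn hodd
    _ ≤ #(shortCycleFree (Fin n)) / 2 ^ n := by gcongr
    _ ≤ perm (tournamentMatrix u) := hu
end

section
/- Let n > 1 be an odd integer and let T be any n×n tournament matrix (a (0,1)-matrix with T_{ii} = 0 for all i and T_{ij} + T_{ji} = 1 for all i ≠ j). Then per(T) ≤ (((n−1)/2)!)^{2n/(n−1)}. -/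
/-!
Bregman's theorem bounds the permanent of a 0-1 matrix with row sums `rᵢ` by `∏ (rᵢ!)^(1/rᵢ)`.
Schrijver's proof is an induction on the order: the numbers `tᵢₖ = aᵢₖ · per(Aᵢₖ)` (with `Aᵢₖ`
the minor) have all row and column sums equal to `p = per A` by Laplace expansion; Jensen's
inequality for `x log x` bounds `p log p` row by row in terms of the `tᵢₖ log tᵢₖ`, the induction
hypothesis bounds each `log per(Aᵢₖ)`, and summing over the rows and exchanging the order of
summation closes the induction.

The row sums of a tournament matrix of odd order `n = 2k + 1` add up to `n(n - 1)/2 = nk`. As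
`r ↦ log(r!)/r` is concave on `r ≥ 1`, its tangent line at `k` gives `∑ log(rᵢ!)/rᵢ ≤ n log(k!)/k`,
and `2n/(n - 1) = n/k`.
-/

open Nat

open Finset Real

namespace Matrix

variable {R : Type*} [CommSemiring R] {n : ℕ}

theorem permanent_nonneg [PartialOrder R] [IsOrderedRing R] {m : Type*} [Fintype m]
    [DecidableEq m] {A : Matrix m m R} (h : ∀ i j, 0 ≤ A i j) : 0 ≤ A.permanent :=
  sum_nonneg fun _ _ => prod_nonneg fun _ _ => h _ _

theorem permanent_eq_zero_of_row_eq_zero {m : Type*} [Fintype m] [DecidableEq m]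
    {A : Matrix m m R} (i : m) (h : ∀ j, A i j = 0) : A.permanent = 0 := by
  rw [← permanent_transpose]
  exact sum_eq_zero fun σ _ => prod_eq_zero (mem_univ i) (h _)

theorem permanent_succ_column_zero (A : Matrix (Fin (n + 1)) (Fin (n + 1)) R) :
    permanent A = ∑ i, A i 0 * permanent (A.submatrix i.succAbove Fin.succ) := by
  rw [permanent, univ_perm_fin_succ, ← univ_product_univ]
  simp only [sum_map, Equiv.toEmbedding_apply, sum_product]
  refine sum_congr rfl fun i _ => Fin.cases ?_ (fun i => ?_) i
  · simp only [permanent, mul_sum, Fin.prod_univ_succ, Equiv.Perm.decomposeFin_symm_apply_zero,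
      Equiv.Perm.decomposeFin_symm_apply_succ, Equiv.swap_self, Equiv.coe_refl, id_eq,
      submatrix_apply, Fin.zero_succAbove]
  · rw [permanent, mul_sum]
    refine Fintype.sum_equiv (Equiv.mulLeft i.cycleRange) _ _ fun σ => ?_
    simp only [Fin.prod_univ_succ, Equiv.Perm.decomposeFin_symm_apply_zero,
      Equiv.Perm.decomposeFin_symm_apply_succ, submatrix_apply, Equiv.coe_mulLeft,
      Equiv.Perm.mul_apply, ← Fin.succAbove_cycleRange]

theorem permanent_succ_column (A : Matrix (Fin (n + 1)) (Fin (n + 1)) R) (j : Fin (n + 1)) :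
    permanent A = ∑ i, A i j * permanent (A.submatrix i.succAbove j.succAbove) := by
  rw [← permanent_permute_rows j.cycleRange.symm, permanent_succ_column_zero]
  simp [submatrix_submatrix, Function.comp_def, Fin.cycleRange_symm_succ]

theorem permanent_succ_row (A : Matrix (Fin (n + 1)) (Fin (n + 1)) R) (i : Fin (n + 1)) :
    permanent A = ∑ j, A i j * permanent (A.submatrix i.succAbove j.succAbove) := by
  rw [← permanent_transpose, permanent_succ_column _ i]
  simp [← transpose_submatrix]

end Matrix

theorem perm_eq_permanent {n : ℕ} (M : Matrix (Fin n) (Fin n) ℝ) : perm M = M.permanent :=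
  M.permanent_transpose

theorem Real.sum_mul_log_sum_le {ι : Type*} (s : Finset ι) (t : ι → ℝ) (ht : ∀ a ∈ s, 0 ≤ t a) :
    (∑ a ∈ s, t a) * Real.log (∑ a ∈ s, t a) ≤
      (∑ a ∈ s, t a) * Real.log #s + ∑ a ∈ s, t a * Real.log (t a) := by
  rcases s.eq_empty_or_nonempty with rfl | hs
  · simp
  set S := ∑ a ∈ s, t a
  have hm : (0 : ℝ) < #s := by exact_mod_cast hs.card_pos
  have jensen := convexOn_mul_log.map_sum_le (t := s) (w := fun _ => (#s : ℝ)⁻¹) (p := t)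
    (fun _ _ => by positivity) (by simp [hm.ne']) ht
  simp only [smul_eq_mul, ← mul_sum] at jensen
  have hscale : (#s : ℝ)⁻¹ * S * Real.log ((#s : ℝ)⁻¹ * S) =
      (#s : ℝ)⁻¹ * (S * Real.log S - S * Real.log #s) := by
    rcases (sum_nonneg ht).eq_or_lt with hS | hS
    · simp [S, ← hS]
    · rw [Real.log_mul (by positivity) hS.ne', Real.log_inv]; ring
  rw [hscale, mul_le_mul_iff_of_pos_left (inv_pos.2 hm)] at jensen
  linarith

theorem Real.log_factorial_succ (r : ℕ) : Real.log (r + 1)! = Real.log (r + 1) + Real.log r ! := by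
  rw [factorial_succ, cast_mul, log_mul (by positivity) (by positivity)]
  push_cast; ring

theorem Real.inv_add_one_le_log_add_one_sub_log {x : ℝ} (hx : 0 < x) :
    (x + 1)⁻¹ ≤ Real.log (x + 1) - Real.log x := by
  have h := one_sub_inv_le_log_of_pos (x := (x + 1) / x) (by positivity)
  rw [log_div (by positivity) hx.ne', inv_div] at h
  have : 1 - x / (x + 1) = (x + 1)⁻¹ := by field_simp; ring
  linarith

theorem Real.log_add_one_sub_log_le_inv {x : ℝ} (hx : 0 < x) :
    Real.log (x + 1) - Real.log x ≤ x⁻¹ := by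
  have h := log_le_sub_one_of_pos (x := (x + 1) / x) (by positivity)
  rw [log_div (by positivity) hx.ne'] at h
  have : (x + 1) / x - 1 = x⁻¹ := by field_simp; ring
  linarith

theorem two_mul_log_factorial_le (r : ℕ) : 2 * Real.log r ! ≤ 2 * r * Real.log (r + 1) - r := by
  induction r with
  | zero => simp
  | succ r ih =>
    have hgap := inv_add_one_le_log_add_one_sub_log (x := (r : ℝ) + 1) (by positivity)
    have : 1 ≤ 2 * ((r : ℝ) + 1) * (Real.log ((r : ℝ) + 1 + 1) - Real.log ((r : ℝ) + 1)) := by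
      calc (1 : ℝ) ≤ 2 * ((r : ℝ) + 1) * ((r : ℝ) + 1 + 1)⁻¹ := by
            rw [← div_eq_mul_inv, le_div_iff₀ (by positivity)]; linarith
        _ ≤ _ := by gcongr
    rw [log_factorial_succ]
    push_cast
    linarith

theorem le_add_mul_sub_of_antitoneOn_sub {f : ℕ → ℝ} {m : ℕ}
    (hf : AntitoneOn (fun r => f (r + 1) - f r) (Set.Ici m)) {a k : ℕ} (ha : m ≤ a) (hk : m ≤ k) :
    f a ≤ f k + ((a : ℝ) - k) * (f (k + 1) - f k) := by
  rcases le_total k a with hka | hak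
  · induction a, hka using Nat.le_induction with
    | base => simp
    | succ a hka ih =>
      have := hf (Set.mem_Ici.2 hk) (Set.mem_Ici.2 (hk.trans hka)) hka
      push_cast
      linarith [ih (hk.trans hka)]
  · induction k, hak using Nat.le_induction with
    | base => simp
    | succ k hak ih =>
      have hd := hf (Set.mem_Ici.2 (ha.trans hak)) (Set.mem_Ici.2 (ha.trans hak).step) k.le_succ
      have : (0 : ℝ) ≤ ((a : ℝ) - (k + 1)) * ((f (k + 1 + 1) - f (k + 1)) - (f (k + 1) - f k)) :=
        mul_nonneg_of_nonpos_of_nonpos (by linarith [(Nat.cast_le (α := ℝ)).2 hak])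
          (by simpa using hd)
      push_cast
      linarith [ih (ha.trans hak)]

noncomputable def logFactorialRoot (r : ℕ) : ℝ := Real.log r ! / r

theorem natCast_mul_logFactorialRoot (r : ℕ) : r * logFactorialRoot r = Real.log r ! := by
  rcases r.eq_zero_or_pos with rfl | hr
  · simp
  · rw [logFactorialRoot, mul_div_cancel₀ _ (by positivity)]

theorem exp_mul_logFactorialRoot (x : ℝ) (k : ℕ) :
    exp (x * logFactorialRoot k) = (k ! : ℝ) ^ (x / k) := by
  rw [rpow_def_of_pos (by positivity), logFactorialRoot]
  ring_nf

theorem logFactorialRoot_add_two_add_le (r : ℕ) (hr : 1 ≤ r) :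
    logFactorialRoot (r + 2) + logFactorialRoot r ≤ 2 * logFactorialRoot (r + 1) := by
  set L := Real.log r !
  set a := Real.log ((r : ℝ) + 1)
  set b := Real.log ((r : ℝ) + 1 + 1)
  have hL := two_mul_log_factorial_le r
  have hba : ((r : ℝ) + 1) * (b - a) ≤ 1 := by
    have := log_add_one_sub_log_le_inv (x := (r : ℝ) + 1) (by positivity)
    rwa [← le_div_iff₀' (by positivity), one_div]
  have key : 2 * logFactorialRoot (r + 1) - (logFactorialRoot (r + 2) + logFactorialRoot r) =
      (2 * r * a - 2 * L - r * ((r + 1) * (b - a))) / (r * (r + 1) * (r + 2)) := by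
    have h1 : Real.log (r + 1)! = a + L := log_factorial_succ r
    have h2 : Real.log (r + 2)! = b + (a + L) := by
      rw [log_factorial_succ (r + 1), h1]; push_cast; ring
    simp only [logFactorialRoot, h1, h2]
    push_cast
    field_simp
    ring
  have : 0 ≤ 2 * r * a - 2 * L - r * ((r + 1) * (b - a)) := by nlinarith
  have := div_nonneg this (by positivity : (0 : ℝ) ≤ r * (r + 1) * (r + 2))
  linarith

theorem antitoneOn_logFactorialRoot_sub :
    AntitoneOn (fun r => logFactorialRoot (r + 1) - logFactorialRoot r) (Set.Ici 1) :=
  antitoneOn_nat_Ici_of_succ_le fun r hr => by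
    have := logFactorialRoot_add_two_add_le r hr
    simp only [add_assoc, one_add_one_eq_two]
    linarith

theorem sum_logFactorialRoot_le {ι : Type*} [Fintype ι] (r : ι → ℕ) (hr : ∀ i, 1 ≤ r i) {k : ℕ}
    (hk : 1 ≤ k) (hsum : ∑ i, (r i : ℝ) = Fintype.card ι * k) :
    ∑ i, logFactorialRoot (r i) ≤ Fintype.card ι * logFactorialRoot k := by
  calc ∑ i, logFactorialRoot (r i)
      ≤ ∑ i, (logFactorialRoot k +
          ((r i : ℝ) - k) * (logFactorialRoot (k + 1) - logFactorialRoot k)) :=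
        sum_le_sum fun i _ =>
          le_add_mul_sub_of_antitoneOn_sub antitoneOn_logFactorialRoot_sub (hr i) hk
    _ = Fintype.card ι * logFactorialRoot k := by
        rw [sum_add_distrib, ← sum_mul, sum_sub_distrib, hsum]
        simp

theorem natCast_mul_logFactorialRoot_sub {r : ℕ} (hr : 1 ≤ r) :
    r * logFactorialRoot r - ((r : ℝ) - 1) * logFactorialRoot (r - 1) = Real.log r := by
  obtain ⟨s, rfl⟩ := Nat.exists_eq_add_of_le' hr
  have h := natCast_mul_logFactorialRoot (s + 1)
  rw [log_factorial_succ, ← natCast_mul_logFactorialRoot s] at h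
  push_cast at h ⊢
  linear_combination h

theorem sum_mul_sum_sub_eq {ι κ R : Type*} [Fintype ι] [Fintype κ] [CommRing R]
    (t G : ι → κ → R) (p : R) (hcol : ∀ k, ∑ i, t i k = p) :
    ∑ i, ∑ k, t i k * (∑ j, G j k - G i k) = ∑ j, ∑ k, (p - t j k) * G j k := by
  simp only [mul_sub, sub_mul, sum_sub_distrib, mul_sum]
  congr 1
  calc ∑ i, ∑ k, ∑ j, t i k * G j k = ∑ i, ∑ j, ∑ k, t i k * G j k :=
        sum_congr rfl fun _ _ => sum_comm
    _ = ∑ j, ∑ i, ∑ k, t i k * G j k := sum_comm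
    _ = ∑ j, ∑ k, p * G j k := sum_congr rfl fun j _ => by
        rw [sum_comm]; exact sum_congr rfl fun k _ => by rw [← hcol k, sum_mul]

theorem mul_log_add_sum_sub_mul_eq {κ : Type*} [Fintype κ] (a t : κ → ℝ) (p : ℝ) {r : ℕ}
    (hr : 1 ≤ r) (ha : ∑ k, a k = r) (ht : ∑ k, t k = p) (hta : ∀ k, t k * a k = t k) :
    p * Real.log r + ∑ k, (p - t k) *
        (logFactorialRoot r - a k * (logFactorialRoot r - logFactorialRoot (r - 1))) =
      Fintype.card κ * (p * logFactorialRoot r) := by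
  set F := logFactorialRoot r
  set Δ := logFactorialRoot r - logFactorialRoot (r - 1)
  have hterm : ∀ k, (p - t k) * (F - a k * Δ) = p * F - p * Δ * a k - F * t k + Δ * t k :=
    fun k => by linear_combination Δ * hta k
  simp only [hterm, sum_add_distrib, sum_sub_distrib, ← mul_sum, ha, ht, sum_const, nsmul_eq_mul]
  rw [Finset.card_univ]
  linear_combination (-p) * natCast_mul_logFactorialRoot_sub hr

section

variable {n : ℕ}

noncomputable def rowCount (A : Matrix (Fin n) (Fin n) ℝ) (i : Fin n) : ℕ := #{j | A i j = 1}

theorem natCast_rowCount {A : Matrix (Fin n) (Fin n) ℝ} (hA : ∀ i j, A i j = 0 ∨ A i j = 1)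
    (i : Fin n) : (rowCount A i : ℝ) = ∑ j, A i j := by
  rw [rowCount, natCast_card_filter]
  exact sum_congr rfl fun j _ => by rcases hA i j with h | h <;> simp [h]

theorem one_le_rowCount_of_permanent_ne_zero {A : Matrix (Fin n) (Fin n) ℝ}
    (hA : ∀ i j, A i j = 0 ∨ A i j = 1) (hp : A.permanent ≠ 0) (i : Fin n) :
    1 ≤ rowCount A i := by
  by_contra! h
  refine hp (Matrix.permanent_eq_zero_of_row_eq_zero i fun j => ?_)
  have : ∀ j, A i j ≠ 1 := by simpa [rowCount, filter_eq_empty_iff] using h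
  exact (hA i j).resolve_right (this j)

theorem logFactorialRoot_rowCount_submatrix {A : Matrix (Fin (n + 1)) (Fin (n + 1)) ℝ}
    (hA : ∀ i j, A i j = 0 ∨ A i j = 1) (i k : Fin (n + 1)) (j : Fin n) :
    logFactorialRoot (rowCount (A.submatrix i.succAbove k.succAbove) j) =
      logFactorialRoot (rowCount A (i.succAbove j)) - A (i.succAbove j) k *
        (logFactorialRoot (rowCount A (i.succAbove j)) -
          logFactorialRoot (rowCount A (i.succAbove j) - 1)) := by
  have hcount : (rowCount (A.submatrix i.succAbove k.succAbove) j : ℝ) + A (i.succAbove j) k =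
      rowCount A (i.succAbove j) := by
    rw [natCast_rowCount (A := A.submatrix _ _) (fun _ _ => hA _ _), natCast_rowCount hA,
      Fin.sum_univ_succAbove _ k]
    simp only [Matrix.submatrix_apply]
    ring
  rcases hA (i.succAbove j) k with h | h <;> rw [h] at hcount ⊢
  · rw [add_zero, Nat.cast_inj] at hcount
    simp [hcount]
  · have : rowCount (A.submatrix i.succAbove k.succAbove) j + 1 = rowCount A (i.succAbove j) := by
      exact_mod_cast hcount
    simp [← this]

theorem log_permanent_le_of_submatrix_le {A : Matrix (Fin (n + 1)) (Fin (n + 1)) ℝ}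
    (hA : ∀ i j, A i j = 0 ∨ A i j = 1) (hp : 0 < A.permanent)
    (hminor : ∀ i k : Fin (n + 1), (A.submatrix i.succAbove k.succAbove).permanent ≤
      exp (∑ j, logFactorialRoot (rowCount (A.submatrix i.succAbove k.succAbove) j))) :
    Real.log A.permanent ≤ ∑ j, logFactorialRoot (rowCount A j) := by
  set p := A.permanent
  set m : Fin (n + 1) → Fin (n + 1) → ℝ := fun i k =>
    (A.submatrix i.succAbove k.succAbove).permanent
  set t : Fin (n + 1) → Fin (n + 1) → ℝ := fun i k => A i k * m i k
  set r := rowCount A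
  -- `G j k` is `logFactorialRoot` of the number of ones of row `j` once column `k` is deleted.
  set G : Fin (n + 1) → Fin (n + 1) → ℝ := fun j k =>
    logFactorialRoot (r j) - A j k * (logFactorialRoot (r j) - logFactorialRoot (r j - 1))
  have hA0 : ∀ i j, 0 ≤ A i j := fun i j => by rcases hA i j with h | h <;> simp [h]
  have hm : ∀ i k, 0 ≤ m i k := fun i k => Matrix.permanent_nonneg fun _ _ => hA0 _ _
  have ht : ∀ i k, 0 ≤ t i k := fun i k => mul_nonneg (hA0 i k) (hm i k)
  have hrow : ∀ i, ∑ k, t i k = p := fun i => (A.permanent_succ_row i).symm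
  have hcol : ∀ k, ∑ i, t i k = p := fun k => (A.permanent_succ_column k).symm
  have htA : ∀ i k, t i k * A i k = t i k := fun i k => by rcases hA i k with h | h <;> simp [t, h]
  have hr : ∀ i, 1 ≤ r i := one_le_rowCount_of_permanent_ne_zero hA hp.ne'
  have hjensen : ∀ i, p * Real.log p ≤ p * Real.log (r i) + ∑ k, t i k * Real.log (t i k) := by
    intro i
    have hsupp : ∀ k, ¬A i k = 1 → t i k = 0 := fun k h => by
      simp [t, (hA i k).resolve_right h]
    have := sum_mul_log_sum_le {k | A i k = 1} (t i) (fun k _ => ht i k)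
    rwa [sum_filter_of_ne fun k _ hk => by_contra fun h => hk (by simp [hsupp k h]),
      sum_filter_of_ne fun k _ hk => by_contra fun h => hk (by simp [hsupp k h]), hrow] at this
  have hinduct : ∀ i k, t i k * Real.log (t i k) ≤ t i k * (∑ j, G j k - G i k) := by
    intro i k
    rcases hA i k with h | h
    · simp [t, h]
    rcases (hm i k).eq_or_lt with h0 | hpos
    · simp [t, ← h0]
    have hsum : ∑ j, logFactorialRoot (rowCount (A.submatrix i.succAbove k.succAbove) j) =
        ∑ j, G j k - G i k := by
      rw [eq_sub_iff_add_eq, Fin.sum_univ_succAbove (fun j => G j k) i, add_comm]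
      simp [G, r, logFactorialRoot_rowCount_submatrix hA]
    have hlog : Real.log (m i k) ≤ ∑ j, G j k - G i k := by
      rw [← hsum, ← log_exp (∑ j, _)]
      exact log_le_log hpos (hminor i k)
    simpa [t, h] using mul_le_mul_of_nonneg_left hlog (hm i k)
  have hsum : ((n : ℝ) + 1) * (p * Real.log p) ≤
      ((n : ℝ) + 1) * (p * ∑ j, logFactorialRoot (r j)) :=
    calc ((n : ℝ) + 1) * (p * Real.log p) = ∑ _i : Fin (n + 1), p * Real.log p := by simp
      _ ≤ ∑ i, (p * Real.log (r i) + ∑ k, t i k * (∑ j, G j k - G i k)) :=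
          sum_le_sum fun i _ => (hjensen i).trans
            ((add_le_add_iff_left _).2 (sum_le_sum fun k _ => hinduct i k))
      _ = ∑ j, (p * Real.log (r j) + ∑ k, (p - t j k) * G j k) := by
          rw [sum_add_distrib, sum_mul_sum_sub_eq t G p hcol, sum_add_distrib]
      _ = ∑ j : Fin (n + 1), ((n : ℝ) + 1) * (p * logFactorialRoot (r j)) :=
          sum_congr rfl fun j _ => by
            simpa using mul_log_add_sum_sub_mul_eq (A j) (t j) p (hr j)
              (natCast_rowCount hA j).symm (hrow j) (htA j)
      _ = ((n : ℝ) + 1) * (p * ∑ j, logFactorialRoot (r j)) := by rw [← mul_sum, ← mul_sum]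
  exact le_of_mul_le_mul_left (le_of_mul_le_mul_left hsum (by positivity)) hp

theorem permanent_le_exp_sum_logFactorialRoot :
    ∀ {n : ℕ} (A : Matrix (Fin n) (Fin n) ℝ), (∀ i j, A i j = 0 ∨ A i j = 1) →
      A.permanent ≤ exp (∑ i, logFactorialRoot (rowCount A i))
  | 0, A, _ => by simp [Matrix.permanent_isEmpty]
  | _ + 1, A, hA => by
    have hA0 : ∀ i j, 0 ≤ A i j := fun i j => by rcases hA i j with h | h <;> simp [h]
    rcases (Matrix.permanent_nonneg hA0).eq_or_lt with h0 | hp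
    · rw [← h0]; positivity
    · rw [← exp_log hp]
      exact exp_le_exp.2 (log_permanent_le_of_submatrix_le hA hp fun i k =>
        permanent_le_exp_sum_logFactorialRoot _ fun _ _ => hA _ _)

end

theorem two_mul_sum_sum_of_tournament {m : Type*} [Fintype m] [DecidableEq m] {T : Matrix m m ℝ}
    (hdiag : ∀ i, T i i = 0) (htour : ∀ i j, i ≠ j → T i j + T j i = 1) :
    2 * ∑ i, ∑ j, T i j = Fintype.card m * (Fintype.card m - 1) := by
  have hpair : ∀ i j, T i j + T j i = 1 - if i = j then 1 else 0 := fun i j => by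
    split_ifs with h
    · simp [h, hdiag]
    · simp [htour i j h]
  calc 2 * ∑ i, ∑ j, T i j = ∑ i, ∑ j, (T i j + T j i) := by
        rw [two_mul]; simp only [sum_add_distrib]; congr 1; exact sum_comm
    _ = Fintype.card m * (Fintype.card m - 1) := by
        simp [hpair, sum_sub_distrib]; ring

/-- For every odd integer `n > 1` and every `n×n` tournament matrix `T`,
`per(T) ≤ (((n−1)/2)!)^{2n/(n−1)}`. -/
theorem stmt_19 (n : ℕ) (hn : 1 < n) (hodd : Odd n) (T : Matrix (Fin n) (Fin n) ℝ)
    (h01 : ∀ i j, T i j = 0 ∨ T i j = 1) (hdiag : ∀ i, T i i = 0)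
    (htour : ∀ i j, i ≠ j → T i j + T j i = 1) :
    perm T ≤ ((((n - 1) / 2)!) : ℝ) ^ ((2 * (n : ℝ)) / ((n : ℝ) - 1)) := by
  obtain ⟨k, rfl⟩ := hodd
  have hk : 1 ≤ k := by omega
  rw [show (2 * k + 1 - 1) / 2 = k by omega, perm_eq_permanent]
  rcases eq_or_ne T.permanent 0 with hp | hp
  · rw [hp]; positivity
  have hrows : ∑ i, (rowCount T i : ℝ) = Fintype.card (Fin (2 * k + 1)) * k := by
    have := two_mul_sum_sum_of_tournament hdiag htour
    simp only [natCast_rowCount h01, Fintype.card_fin] at this ⊢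
    push_cast at this ⊢
    linarith
  calc T.permanent ≤ exp (∑ i, logFactorialRoot (rowCount T i)) :=
        permanent_le_exp_sum_logFactorialRoot T h01
    _ ≤ exp ((2 * k + 1 : ℕ) * logFactorialRoot k) := by
        simpa using
          sum_logFactorialRoot_le _ (one_le_rowCount_of_permanent_ne_zero h01 hp) hk hrows
    _ = _ := by
        rw [exp_mul_logFactorialRoot]
        congr 1
        push_cast
        field_simp
        ring
end
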